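/- Suppose R_C = εR_B + Σ_{i=1}^k ε_i R_{B_i} with ε, ε_i ∈ {−1,1}, where ker(B) ≠ 0 and all operators are self- or skew-adjoint (canonical builds). If A : V → V is a linear operator with Im(A) ⊆ ker(B) and A*R_C = R_C, then R_C = Σ_{i=1}^k ε_i R_{A*B_iA}, each term being an algebraic curvature tensor of the same build as R_{B_i}. -/
import Mathlib

open RealInnerProductSpace

variable {V : Type*} [NormedAddCommGroup V] [InnerProductSpace ℝ V] [FiniteDimensional ℝ V]

noncomputable def RS (A : V →ₗ[ℝ] V) (x y z w : V) : ℝ :=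
  ⟪A x, w⟫ * ⟪A y, z⟫ - ⟪A x, z⟫ * ⟪A y, w⟫

noncomputable def RL (A : V →ₗ[ℝ] V) (x y z w : V) : ℝ :=
  RS A x y z w - 2 * ⟪A x, y⟫ * ⟪A z, w⟫

def IsACT (R : V → V → V → V → ℝ) : Prop :=
  (∀ x y z w, R x y z w = -R y x z w) ∧
  (∀ x y z w, R x y z w = R z w x y) ∧
  (∀ x y z w, R x y z w + R z x y w + R y z x w = 0)

open Classical in
noncomputable def Rcanon (A : V →ₗ[ℝ] V) : V → V → V → V → ℝ :=
  if LinearMap.adjoint A = A then RS A else RL A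

lemma sym_of_self {M : V →ₗ[ℝ] V} (h : LinearMap.adjoint M = M) (x y : V) :
    ⟪M x, y⟫ = ⟪M y, x⟫ := by
  conv_lhs => rw [← h]
  rw [LinearMap.adjoint_inner_left, real_inner_comm]

lemma skew_of_skew {M : V →ₗ[ℝ] V} (h : LinearMap.adjoint M = -M) (x y : V) :
    ⟪M x, y⟫ = -⟪M y, x⟫ := by
  have this1 : ⟪x, LinearMap.adjoint M y⟫ = ⟪M x, y⟫ := LinearMap.adjoint_inner_right M x y
  rw [h] at this1
  simp only [LinearMap.neg_apply, inner_neg_right] at this1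
  rw [← this1, real_inner_comm]

lemma isACT_RS {M : V →ₗ[ℝ] V} (h : LinearMap.adjoint M = M) : IsACT (RS M) := by
  have hs := sym_of_self h
  refine ⟨fun x y z w => by simp only [RS]; ring,
    fun x y z w => ?_, fun x y z w => ?_⟩
  · simp only [RS]; rw [hs z y, hs w x, hs z x, hs w y]; ring
  · simp only [RS]; rw [hs z y, hs z x, hs y x]; ring

lemma isACT_RL {M : V →ₗ[ℝ] V} (h : LinearMap.adjoint M = -M) : IsACT (RL M) := by
  have hs := skew_of_skew h
  refine ⟨fun x y z w => ?_, fun x y z w => ?_, fun x y z w => ?_⟩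
  · simp only [RL, RS]; rw [hs y x]; ring
  · simp only [RL, RS]; rw [hs z y, hs w x, hs z x, hs w y, hs z w]; ring
  · simp only [RL, RS]; rw [hs z y, hs z x, hs y x]; ring

lemma RS_pull (X A : V →ₗ[ℝ] V) (x y z w : V) :
    RS X (A x) (A y) (A z) (A w) = RS (LinearMap.adjoint A ∘ₗ X ∘ₗ A) x y z w := by
  simp only [RS, LinearMap.comp_apply, LinearMap.adjoint_inner_left]

lemma RL_pull (X A : V →ₗ[ℝ] V) (x y z w : V) :
    RL X (A x) (A y) (A z) (A w) = RL (LinearMap.adjoint A ∘ₗ X ∘ₗ A) x y z w := by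
  simp only [RL, RS, LinearMap.comp_apply, LinearMap.adjoint_inner_left]

lemma adjoint_conj_self (A X : V →ₗ[ℝ] V) (h : LinearMap.adjoint X = X) :
    LinearMap.adjoint (LinearMap.adjoint A ∘ₗ X ∘ₗ A)
      = LinearMap.adjoint A ∘ₗ X ∘ₗ A := by
  simp [LinearMap.adjoint_comp, LinearMap.adjoint_adjoint, h, LinearMap.comp_assoc]

lemma adjoint_conj_skew (A X : V →ₗ[ℝ] V) (h : LinearMap.adjoint X = -X) :
    LinearMap.adjoint (LinearMap.adjoint A ∘ₗ X ∘ₗ A)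
      = -(LinearMap.adjoint A ∘ₗ X ∘ₗ A) := by
  rw [LinearMap.adjoint_comp, LinearMap.adjoint_comp, LinearMap.adjoint_adjoint, h]
  ext v; simp

lemma RL_eq_RS_of_zero : RL (0 : V →ₗ[ℝ] V) = RS 0 := by
  funext x y z w; simp [RL, RS]

lemma Rcanon_pull (X A : V →ₗ[ℝ] V)
    (hX : LinearMap.adjoint X = X ∨ LinearMap.adjoint X = -X) (x y z w : V) :
    Rcanon X (A x) (A y) (A z) (A w)
      = Rcanon (LinearMap.adjoint A ∘ₗ X ∘ₗ A) x y z w := by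
  by_cases h : LinearMap.adjoint X = X
  · rw [Rcanon, if_pos h, Rcanon, if_pos (adjoint_conj_self A X h), RS_pull]
  · have hsk : LinearMap.adjoint X = -X := hX.resolve_left h
    rw [Rcanon, if_neg h]
    by_cases h2 : LinearMap.adjoint (LinearMap.adjoint A ∘ₗ X ∘ₗ A)
        = LinearMap.adjoint A ∘ₗ X ∘ₗ A
    · have hz : LinearMap.adjoint A ∘ₗ X ∘ₗ A = 0 := by
        have h3 := adjoint_conj_skew A X hsk
        have : (2 : ℝ) • (LinearMap.adjoint A ∘ₗ X ∘ₗ A) = 0 := by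
          rw [two_smul]; rw [h3] at h2; linear_combination (norm := module) -h2
        have h4 := congrArg (fun f => (2 : ℝ)⁻¹ • f) this
        simpa [smul_smul] using h4
      rw [Rcanon, if_pos h2, hz, ← RL_eq_RS_of_zero, ← hz, ← RL_pull]
    · rw [Rcanon, if_neg h2, RL_pull]

lemma Rcanon_zero (x y z w : V) : Rcanon (0 : V →ₗ[ℝ] V) x y z w = 0 := by
  rw [Rcanon, if_pos (by simp)]
  simp [RS]

lemma isACT_Rcanon (X : V →ₗ[ℝ] V)
    (hX : LinearMap.adjoint X = X ∨ LinearMap.adjoint X = -X) :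
    IsACT (Rcanon X) := by
  by_cases h : LinearMap.adjoint X = X
  · rw [Rcanon, if_pos h]; exact isACT_RS h
  · rw [Rcanon, if_neg h]; exact isACT_RL (hX.resolve_left h)

theorem stmt_17 (k : ℕ) (C B : V →ₗ[ℝ] V) (Bs : Fin k → (V →ₗ[ℝ] V))
    (hC : LinearMap.adjoint C = C ∨ LinearMap.adjoint C = -C)
    (hB : LinearMap.adjoint B = B ∨ LinearMap.adjoint B = -B)
    (hBs : ∀ i, LinearMap.adjoint (Bs i) = Bs i ∨ LinearMap.adjoint (Bs i) = -(Bs i))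
    (hker : LinearMap.ker B ≠ ⊥)
    (ε : ℝ) (hε : ε = 1 ∨ ε = -1)
    (εs : Fin k → ℝ) (hεs : ∀ i, εs i = 1 ∨ εs i = -1)
    (hsum : ∀ x y z w : V,
      Rcanon C x y z w = ε * Rcanon B x y z w + ∑ i, εs i * Rcanon (Bs i) x y z w)
    (A : V →ₗ[ℝ] V) (hA : LinearMap.range A ≤ LinearMap.ker B)
    (hfix : ∀ x y z w : V, Rcanon C (A x) (A y) (A z) (A w) = Rcanon C x y z w) :
    (∀ x y z w : V,
      Rcanon C x y z w
        = ∑ i, εs i * Rcanon (LinearMap.adjoint A ∘ₗ Bs i ∘ₗ A) x y z w) ∧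
    (∀ i, IsACT (Rcanon (LinearMap.adjoint A ∘ₗ Bs i ∘ₗ A)) ∧
      (LinearMap.adjoint (Bs i) = Bs i →
        LinearMap.adjoint (LinearMap.adjoint A ∘ₗ Bs i ∘ₗ A)
          = LinearMap.adjoint A ∘ₗ Bs i ∘ₗ A) ∧
      (LinearMap.adjoint (Bs i) = -(Bs i) →
        LinearMap.adjoint (LinearMap.adjoint A ∘ₗ Bs i ∘ₗ A)
          = -(LinearMap.adjoint A ∘ₗ Bs i ∘ₗ A))) := by
  have hBA : LinearMap.adjoint A ∘ₗ B ∘ₗ A = 0 := by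
    have hzero : B ∘ₗ A = 0 := by
      ext v
      exact hA ⟨v, rfl⟩
    rw [hzero]; ext v; simp
  constructor
  · intro x y z w
    rw [← hfix x y z w, hsum]
    rw [Rcanon_pull B A hB, hBA, Rcanon_zero, mul_zero, zero_add]
    exact Finset.sum_congr rfl fun i _ => by rw [Rcanon_pull (Bs i) A (hBs i)]
  · intro i
    have hadj : LinearMap.adjoint (LinearMap.adjoint A ∘ₗ Bs i ∘ₗ A)
        = LinearMap.adjoint A ∘ₗ Bs i ∘ₗ A ∨
        LinearMap.adjoint (LinearMap.adjoint A ∘ₗ Bs i ∘ₗ A)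
        = -(LinearMap.adjoint A ∘ₗ Bs i ∘ₗ A) :=
      (hBs i).imp (adjoint_conj_self A (Bs i)) (adjoint_conj_skew A (Bs i))
    exact ⟨isACT_Rcanon _ hadj, adjoint_conj_self A (Bs i), adjoint_conj_skew A (Bs i)⟩
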